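/- Let M = (W,R) be a Kripke frame, s₀ ∈ W, and suppose M, ∅, s₀ ⊨ Inf. Say that a state x 'sees a dead end' if there is y with R x y and y has no R-successor. Then: (i) s₀ sees a dead end; (ii) ¬R s₀ s₀, for every t with R s₀ t we have ¬R t t, and no R-successor of s₀ sees a dead end; (iii) there exists t with R s₀ t and R t s₀; (iv) every t with R s₀ t that has an R-successor has an R-successor u with u ≠ t, u ≠ s₀ and u not seeing a dead end; (v) for all t,u with R s₀ t, R t u and u not seeing a dead end: R u s₀, R s₀ u, ¬R u t and ¬R u u; (vi) for all t,u,v with R s₀ t, R t u, R u v, where neither u nor v sees a dead end: R t v. -/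
import Mathlib


/-- Formulas of the memory logic B(⟨r⟩,k):  F ::= k | ¬F | F ∧ F | ◇F. -/
inductive MForm : Type
  | known : MForm
  | neg : MForm → MForm
  | conj : MForm → MForm → MForm
  | dia : MForm → MForm
deriving DecidableEq

namespace MForm

def disj (φ ψ : MForm) : MForm := neg (conj (neg φ) (neg ψ))
def impl (φ ψ : MForm) : MForm := neg (conj φ (neg ψ))
def box (φ : MForm) : MForm := neg (dia (neg φ))
def bot : MForm := conj known (neg known)
def top : MForm := disj known (neg known)

end MForm

/-- Satisfaction for B(⟨r⟩,k) on a Kripke frame (W, R), at state `w`, with memory `S`.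
`◇` is the remember-and-move operator: the current state is added to the memory. -/
def MSat {W : Type*} (R : W → W → Prop) : Set W → W → MForm → Prop
  | S, w, .known => w ∈ S
  | S, w, .neg φ => ¬ MSat R S w φ
  | S, w, .conj φ ψ => MSat R S w φ ∧ MSat R S w ψ
  | S, w, .dia φ => ∃ t, R w t ∧ MSat R (S ∪ {w}) t φ

/-- A formula is satisfiable iff it holds at some state of some frame with empty initial memory. -/
def MSatisfiable (φ : MForm) : Prop :=
  ∃ (W : Type) (R : W → W → Prop) (s : W), MSat R ∅ s φ

namespace MForm

/-- The macro s ≡ ◇□⊥ : "the current state sees a dead end". -/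
def sees : MForm := dia (box bot)

/-- a-or-b ≡ k ∧ ◇(k ∧ ¬s). -/
def aorb : MForm := conj known (dia (conj known (neg sees)))

/-- c ≡ k ∧ □(k → s). -/
def cmac : MForm := conj known (box (impl known sees))

/-- The formula `Inf`, the conjunction of the seven conjuncts (1)–(7). -/
def infF : MForm :=
  conj sees <|                                                              -- (1) s
  conj (box (neg sees)) <|                                                  -- (2) □¬s
  conj (box (box (impl known sees))) <|                                     -- (3) □□(k → s)
  conj (dia (dia known)) <|                                                 -- (4) ◇◇k
  conj (box (impl (dia top) (dia (conj (neg known) (neg sees))))) <|        -- (5)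
  conj (box (box (impl (neg sees)
        (dia (conj known (conj sees (dia (conj known (box (impl known sees)))))))))) <|  -- (6)
  box (box (impl (neg sees) (box (impl (neg sees)
        (dia (conj known (conj sees (box (impl aorb (dia cmac))))))))))     -- (7)

end MForm

/-- A state `x` "sees a dead end": some successor of `x` has no successor. -/
def seesDeadEnd {W : Type*} (R : W → W → Prop) (x : W) : Prop :=
  ∃ y, R x y ∧ ∀ z, ¬ R y z

section Helpers
variable {W : Type*} {R : W → W → Prop}

lemma msat_dia {S : Set W} {w : W} {φ : MForm} :
    MSat R S w (MForm.dia φ) ↔ ∃ t, R w t ∧ MSat R (S ∪ {w}) t φ := Iff.rfl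

lemma msat_neg {S : Set W} {w : W} {φ : MForm} :
    MSat R S w (MForm.neg φ) ↔ ¬ MSat R S w φ := Iff.rfl

lemma msat_conj {S : Set W} {w : W} {φ ψ : MForm} :
    MSat R S w (MForm.conj φ ψ) ↔ MSat R S w φ ∧ MSat R S w ψ := Iff.rfl

lemma msat_known {S : Set W} {w : W} :
    MSat R S w MForm.known ↔ w ∈ S := Iff.rfl

lemma msat_box {S : Set W} {w : W} {φ : MForm} :
    MSat R S w (MForm.box φ) ↔ ∀ t, R w t → MSat R (S ∪ {w}) t φ := by
  simp only [MForm.box, MSat, not_exists, not_and, not_not]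

lemma msat_impl {S : Set W} {w : W} {φ ψ : MForm} :
    MSat R S w (MForm.impl φ ψ) ↔ (MSat R S w φ → MSat R S w ψ) := by
  simp only [MForm.impl, MSat, not_and, not_not]

lemma msat_bot {S : Set W} {w : W} : ¬ MSat R S w MForm.bot := fun h => h.2 h.1

lemma msat_sees {S : Set W} {w : W} : MSat R S w MForm.sees ↔ seesDeadEnd R w := by
  simp only [MForm.sees, msat_dia, msat_box, msat_neg, seesDeadEnd]
  constructor
  · rintro ⟨t, ht, h2⟩
    exact ⟨t, ht, fun z hz => msat_bot (h2 z hz)⟩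
  · rintro ⟨t, ht, hdead⟩
    exact ⟨t, ht, fun z hz => absurd hz (hdead z)⟩

lemma msat_top {S : Set W} {w : W} : MSat R S w MForm.top := by
  simp only [MForm.top, MForm.disj, MSat]
  tauto

end Helpers
/-- the semantic consequences (i)–(vi) of the conjuncts of Inf. -/
theorem inf_consequences {W : Type*} (R : W → W → Prop) (s₀ : W)
    (h : MSat R ∅ s₀ MForm.infF) :
    -- (i) s₀ sees a dead end
    seesDeadEnd R s₀
    -- (ii) s₀ is irreflexive, its successors are irreflexive,
    -- and no successor of s₀ sees a dead end
    ∧ (¬ R s₀ s₀ ∧ (∀ t, R s₀ t → ¬ R t t) ∧ (∀ t, R s₀ t → ¬ seesDeadEnd R t))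
    -- (iii) some successor of s₀ sees s₀ back
    ∧ (∃ t, R s₀ t ∧ R t s₀)
    -- (iv) every successor of s₀ that has a successor has one different
    -- from itself and from s₀ that does not see a dead end
    ∧ (∀ t, R s₀ t → (∃ z, R t z) →
        ∃ u, R t u ∧ u ≠ t ∧ u ≠ s₀ ∧ ¬ seesDeadEnd R u)
    -- (v) chain states are linked to s₀ in both directions, and the relation
    -- between chain states is asymmetric and irreflexive
    ∧ (∀ t u, R s₀ t → R t u → ¬ seesDeadEnd R u →
        R u s₀ ∧ R s₀ u ∧ ¬ R u t ∧ ¬ R u u)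
    -- (vi) the relation between chain states is transitive
    ∧ (∀ t u v, R s₀ t → R t u → R u v →
        ¬ seesDeadEnd R u → ¬ seesDeadEnd R v → R t v) := by
  obtain ⟨h1, h2, h3, h4, h5, h6, h7⟩ := h
  have hsee : seesDeadEnd R s₀ := msat_sees.mp h1
  have hns : ∀ t, R s₀ t → ¬ seesDeadEnd R t := by
    intro t ht hsd
    exact (msat_box.mp h2 t ht) (msat_sees.mpr hsd)
  have hmem3 : ∀ t u, R s₀ t → R t u → (u = s₀ ∨ u = t) → seesDeadEnd R u := by
    intro t u ht hu hmem
    have h' := msat_box.mp (msat_box.mp h3 t ht) u hu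
    rw [msat_impl, msat_known, msat_sees] at h'
    apply h'
    simp only [Set.mem_union, Set.mem_singleton_iff, Set.mem_empty_iff_false, false_or, or_assoc]
    exact hmem
  have hirr0 : ¬ R s₀ s₀ := fun hr => hns s₀ hr hsee
  have hirr : ∀ t, R s₀ t → ¬ R t t := fun t ht hr =>
    hns t ht (hmem3 t t ht hr (Or.inr rfl))
  have part3 : ∃ t, R s₀ t ∧ R t s₀ := by
    obtain ⟨t, ht, u, hu, humem⟩ := h4
    rw [msat_known] at humem
    simp only [Set.mem_union, Set.mem_singleton_iff, Set.mem_empty_iff_false, false_or, or_assoc] at humem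
    rcases humem with rfl | rfl
    · exact ⟨t, ht, hu⟩
    · exact absurd hu (hirr _ ht)
  have part4 : ∀ t, R s₀ t → (∃ z, R t z) →
      ∃ u, R t u ∧ u ≠ t ∧ u ≠ s₀ ∧ ¬ seesDeadEnd R u := by
    intro t ht hz0
    obtain ⟨z, hz⟩ := hz0
    have h' := msat_box.mp h5 t ht
    rw [msat_impl] at h'
    obtain ⟨u, hu, hnk, hnsu⟩ := h' ⟨z, hz, msat_top⟩
    refine ⟨u, hu, ?_, ?_, fun hsd => hnsu (msat_sees.mpr hsd)⟩
    · rintro rfl; exact hnk (by simp [msat_known])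
    · rintro rfl; exact hnk (by simp [msat_known])
  have part5 : ∀ t u, R s₀ t → R t u → ¬ seesDeadEnd R u →
      R u s₀ ∧ R s₀ u ∧ ¬ R u t ∧ ¬ R u u := by
    intro t u ht hu hnsu
    have h' := msat_box.mp (msat_box.mp h6 t ht) u hu
    rw [msat_impl, msat_neg, msat_sees] at h'
    obtain ⟨x, hux, hxk, hxs, y, hxy, hyk, hybox⟩ := h' hnsu
    rw [msat_known] at hxk
    rw [msat_sees] at hxs
    simp only [Set.mem_union, Set.mem_singleton_iff, Set.mem_empty_iff_false, false_or, or_assoc] at hxk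
    have hx0 : x = s₀ := by
      rcases hxk with rfl | rfl | rfl
      · rfl
      · exact absurd hxs (hns _ ht)
      · exact absurd hxs hnsu
    subst x
    rw [msat_known] at hyk
    simp only [Set.mem_union, Set.mem_singleton_iff, Set.mem_empty_iff_false, false_or, or_assoc] at hyk
    rw [msat_box] at hybox
    have hyfact : ∀ z, R y z → (z = s₀ ∨ z = t ∨ z = u ∨ z = y) → seesDeadEnd R z := by
      intro z hz hmem
      have h'' := hybox z hz
      rw [msat_impl, msat_known, msat_sees] at h''
      apply h''
      simp only [Set.mem_union, Set.mem_singleton_iff, Set.mem_empty_iff_false, false_or, or_assoc]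
      rcases hmem with rfl | rfl | rfl | rfl <;> simp
    have hy3 : y = s₀ ∨ y = t ∨ y = u := by
      rcases hyk with hy | hy | hy | hy <;> simp [hy]
    have hyu : y = u := by
      rcases hy3 with hy | hy | hy
      · rw [hy] at hxy; exact absurd hxy hirr0
      · exact absurd (hyfact u (by rw [hy]; exact hu) (by simp)) hnsu
      · exact hy
    rw [hyu] at hxy hyfact
    refine ⟨hux, hxy, ?_, ?_⟩
    · intro hut
      exact hns t ht (hyfact t hut (by simp))
    · intro huu
      exact hnsu (hyfact u huu (by simp))
  have part6 : ∀ t u v, R s₀ t → R t u → R u v →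
      ¬ seesDeadEnd R u → ¬ seesDeadEnd R v → R t v := by
    intro t u v ht hu hv hnsu hnsv
    have h' := msat_box.mp (msat_box.mp h7 t ht) u hu
    rw [msat_impl, msat_neg, msat_sees] at h'
    have h'' := msat_box.mp (h' hnsu) v hv
    rw [msat_impl, msat_neg, msat_sees] at h''
    obtain ⟨x, hvx, hxk, hxs, hxbox⟩ := h'' hnsv
    rw [msat_known] at hxk
    rw [msat_sees] at hxs
    simp only [Set.mem_union, Set.mem_singleton_iff, Set.mem_empty_iff_false, false_or, or_assoc] at hxk
    have hx0 : x = s₀ := by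
      rcases hxk with rfl | rfl | rfl | rfl
      · rfl
      · exact absurd hxs (hns _ ht)
      · exact absurd hxs hnsu
      · exact absurd hxs hnsv
    subst x
    rw [msat_box] at hxbox
    have htfact := hxbox t ht
    rw [msat_impl] at htfact
    have haorb : MSat R (((((∅ ∪ {s₀}) ∪ {t}) ∪ {u}) ∪ {v}) ∪ {s₀}) t MForm.aorb := by
      refine ⟨by simp [msat_known], u, hu, by simp [msat_known],
        fun hs => hnsu (msat_sees.mp hs)⟩
    obtain ⟨q, htq, hqk, hqbox⟩ := htfact haorb
    rw [msat_known] at hqk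
    simp only [Set.mem_union, Set.mem_singleton_iff, Set.mem_empty_iff_false, false_or, or_assoc] at hqk
    rw [msat_box] at hqbox
    have hqfact : ∀ z, R q z → (z = s₀ ∨ z = t ∨ z = u ∨ z = v ∨ z = q) → seesDeadEnd R z := by
      intro z hz hmem
      have h3' := hqbox z hz
      rw [msat_impl, msat_known, msat_sees] at h3'
      apply h3'
      simp only [Set.mem_union, Set.mem_singleton_iff, Set.mem_empty_iff_false, false_or, or_assoc]
      rcases hmem with rfl | rfl | rfl | rfl | rfl <;> simp
    have hq4 : q = s₀ ∨ q = t ∨ q = u ∨ q = v := by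
      rcases hqk with hq | hq | hq | hq | hq | hq <;> simp [hq]
    rcases hq4 with hq | hq | hq | hq
    · exact absurd (hqfact t (by rw [hq]; exact ht) (by simp)) (hns t ht)
    · rw [hq] at htq; exact absurd htq (hirr t ht)
    · exact absurd (hqfact v (by rw [hq]; exact hv) (by simp)) hnsv
    · rw [hq] at htq; exact htq
  exact ⟨hsee, ⟨hirr0, hirr, hns⟩, part3, part4, part5, part6⟩
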